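/- arXiv:1702.01129 — 2 statements merged into one kernel-verified Lean document; each statement's English description precedes it below -/
import Mathlib

section
/- For the geometric series with ratio -q where 0 ≤ q ≤ 1, the first-level transformed partial sums s¹(n) = (1/2)·s⁰(n) + (1/4)·s⁰(n-1) + (1/4)·s⁰(n+1), with s⁰(n) = ∑_{k=0}^n (-q)^k, converge to 1/(1+q) as n → ∞, including at q = 1 where the original series diverges. -/
/-!
The partial sums of `∑ xᵏ` are `(1 - x^(n+1)) / (1 - x)`, so the weighted average
`½ s(n) + ¼ s(n-1) + ¼ s(n+1)` equals `1/(1-x) - xⁿ (1+x)² / (4(1-x))`.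
For `|x| < 1` the error term tends to `0`; at `x = -1` the factor `(1+x)²` kills it outright,
which is why the averaged sums of `1 - 1 + 1 - ⋯` converge to `1/2`.
-/

open Finset Filter Topology

theorem geom_sum_smoothed_eq {K : Type*} [Field K] [CharZero K] {x : K} (hx : x ≠ 1) (n : ℕ) :
    (1/2) * ∑ k ∈ range (n + 2), x ^ k + (1/4) * ∑ k ∈ range (n + 1), x ^ k
        + (1/4) * ∑ k ∈ range (n + 3), x ^ k
      = 1 / (1 - x) - x ^ (n + 1) * ((1 + x) ^ 2 / (4 * (1 - x))) := by
  have hx' : 1 - x ≠ 0 := sub_ne_zero.mpr hx.symm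
  rw [geom_sum_eq hx, geom_sum_eq hx, geom_sum_eq hx]
  have hx'' : x - 1 ≠ 0 := sub_ne_zero.mpr hx
  field_simp
  ring

theorem tendsto_geom_sum_smoothed {x : ℝ} (hx₀ : -1 ≤ x) (hx₁ : x < 1) :
    Tendsto (fun n : ℕ => (1/2) * ∑ k ∈ range (n + 2), x ^ k
        + (1/4) * ∑ k ∈ range (n + 1), x ^ k + (1/4) * ∑ k ∈ range (n + 3), x ^ k)
      atTop (𝓝 (1 / (1 - x))) := by
  simp_rw [geom_sum_smoothed_eq hx₁.ne]
  rcases hx₀.eq_or_lt with rfl | hx₀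
  · simp
  · have hpow : Tendsto (fun n : ℕ => x ^ (n + 1)) atTop (𝓝 0) :=
      (tendsto_pow_atTop_nhds_zero_of_abs_lt_one (abs_lt.mpr ⟨hx₀, hx₁⟩)).comp
        (tendsto_add_atTop_nat 1)
    simpa using tendsto_const_nhds.sub (hpow.mul_const ((1 + x) ^ 2 / (4 * (1 - x))))

theorem stmt_5 (q : ℝ) (hq0 : 0 ≤ q) (hq1 : q ≤ 1)
    (s0 : ℕ → ℝ) (hs0 : ∀ n, s0 n = ∑ k ∈ Finset.range (n + 1), (-q) ^ k)
    (s1 : ℕ → ℝ)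
    (hs1 : ∀ n, 1 ≤ n → s1 n = (1/2) * s0 n + (1/4) * s0 (n - 1) + (1/4) * s0 (n + 1)) :
    Filter.Tendsto s1 Filter.atTop (nhds (1 / (1 + q))) := by
  rw [← tendsto_add_atTop_iff_nat 1]
  have hlim := tendsto_geom_sum_smoothed (x := -q) (by linarith) (by linarith)
  rw [sub_neg_eq_add] at hlim
  refine hlim.congr fun n => ?_
  rw [hs1 (n + 1) n.succ_pos, hs0, hs0, hs0, Nat.add_sub_cancel]
end

section
/- The coefficients c_{k,j} in the representation s^j(j) = ∑_{k=0}^{2j} c_{k,j}·a_k satisfy c_{0,j} = 1 for all j ≥ 0, and 0 ≤ c_{k,j} ≤ 1 for all 0 ≤ k ≤ 2j. -/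
noncomputable def transform (s : ℕ → ℝ) (n : ℕ) : ℝ :=
  (1/2) * s n + (1/4) * s (n - 1) + (1/4) * s (n + 1)

noncomputable def sj (a : ℕ → ℝ) : ℕ → ℕ → ℝ
  | 0 => fun n => ∑ k ∈ Finset.range (n + 1), a k
  | j + 1 => transform (sj a j)

/-!
Testing the representation on the unit sequence `a = Pi.single k 1` shows `c k = s^j(j)` for that
sequence. Its partial sums `s⁰` are `0` or `1`, and identically `1` when `k = 0`; since each step
`s^{j-1} ↦ s^j` is a convex combination, every interval containing all values of `s⁰` contains all
values of `s^j`.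
-/

open Finset

lemma transform_mem_Icc {s : ℕ → ℝ} {lo hi : ℝ} (hs : ∀ n, s n ∈ Set.Icc lo hi) (n : ℕ) :
    transform s n ∈ Set.Icc lo hi := by
  obtain ⟨h₀, h₀'⟩ := hs n
  obtain ⟨h₁, h₁'⟩ := hs (n - 1)
  obtain ⟨h₂, h₂'⟩ := hs (n + 1)
  unfold transform
  constructor <;> linarith

lemma sj_mem_Icc {a : ℕ → ℝ} {lo hi : ℝ}
    (ha : ∀ n, ∑ k ∈ range (n + 1), a k ∈ Set.Icc lo hi) (j n : ℕ) :
    sj a j n ∈ Set.Icc lo hi := by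
  induction j generalizing n with
  | zero => exact ha n
  | succ j ih => exact transform_mem_Icc ih n

lemma sum_range_pi_single_mem_Icc (k m : ℕ) :
    ∑ i ∈ range m, Pi.single k (1 : ℝ) i ∈ Set.Icc 0 1 := by
  rw [sum_pi_single']
  split_ifs <;> simp

lemma eq_sj_pi_single_of_forall_sj_eq_sum {j : ℕ} {c : ℕ → ℝ}
    (hc : ∀ a : ℕ → ℝ, sj a j j = ∑ k ∈ range (2 * j + 1), c k * a k) {k : ℕ} (hk : k ≤ 2 * j) :
    c k = sj (Pi.single k 1) j j := by
  rw [hc, sum_eq_single_of_mem k (mem_range.2 (by omega))]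
  · simp
  · intro i _ hik
    simp [hik]

theorem stmt_9 (j : ℕ) (c : ℕ → ℝ)
    (hc : ∀ a : ℕ → ℝ, sj a j j = ∑ k ∈ Finset.range (2 * j + 1), c k * a k) :
    c 0 = 1 ∧ ∀ k ≤ 2 * j, 0 ≤ c k ∧ c k ≤ 1 := by
  refine ⟨?_, fun k hk => ?_⟩
  · have h : sj (Pi.single 0 1) j j ∈ Set.Icc (1 : ℝ) 1 :=
      sj_mem_Icc (fun n => by simp) j j
    rw [eq_sj_pi_single_of_forall_sj_eq_sum hc (Nat.zero_le _)]
    simpa using h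
  · rw [eq_sj_pi_single_of_forall_sj_eq_sum hc hk]
    exact sj_mem_Icc (fun n => sum_range_pi_single_mem_Icc k (n + 1)) j j
end
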